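/- arXiv:2405.20482 — 4 statements merged into one kernel-verified Lean document; each statement's English description precedes it below -/
import Mathlib

section
/- Let Δ be an n×k real matrix such that every row of Δ has at most one nonzero entry, and for every column index i ∈ {1,...,k} there exists a row a with Δ_{a,i} ≠ 0. Let L be an invertible k×k matrix and set Δ̂ := ΔL. If the number of nonzero entries of Δ̂ is at most the number of nonzero entries of Δ, then L is a permutation-scaling matrix, i.e., L = DP for an invertible diagonal matrix D and a permutation matrix P. -/
/-- Number of nonzero entries of a matrix. -/
noncomputable def nnz {n k : ℕ} (M : Matrix (Fin n) (Fin k) ℝ) : ℕ :=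
  Set.ncard {p : Fin n × Fin k | M p.1 p.2 ≠ 0}

theorem disentanglement_via_one_sparse_perturbations
    {n k : ℕ} (Δ : Matrix (Fin n) (Fin k) ℝ)
    (h1sparse : ∀ a : Fin n, ∀ i j : Fin k, Δ a i ≠ 0 → Δ a j ≠ 0 → i = j)
    (hsuff : ∀ i : Fin k, ∃ a : Fin n, Δ a i ≠ 0)
    (L : Matrix (Fin k) (Fin k) ℝ) (hL : IsUnit L)
    (hnnz : nnz (Δ * L) ≤ nnz Δ) :
    ∃ (d : Fin k → ℝ) (σ : Equiv.Perm (Fin k)),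
      (∀ i, d i ≠ 0) ∧ L = Matrix.diagonal d * σ.permMatrix ℝ := by
  classical
  set u := hL.unit with hu
  have huL : (↑u : Matrix (Fin k) (Fin k) ℝ) = L := hL.unit_spec
  -- every row of L is nonzero
  have hrow : ∀ i : Fin k, ∃ j, L i j ≠ 0 := by
    intro i
    by_contra h
    push_neg at h
    have h0 : L * (↑u⁻¹ : Matrix (Fin k) (Fin k) ℝ) = 1 := by
      rw [← huL]; exact u.mul_inv
    have h1 : (L * (↑u⁻¹ : Matrix (Fin k) (Fin k) ℝ)) i i = 1 := by
      rw [h0, Matrix.one_apply_eq]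
    rw [Matrix.mul_apply] at h1
    simp [h] at h1
  -- every column of L is nonzero
  have hcol : ∀ j : Fin k, ∃ i, L i j ≠ 0 := by
    intro j
    by_contra h
    push_neg at h
    have h0 : (↑u⁻¹ : Matrix (Fin k) (Fin k) ℝ) * L = 1 := by
      rw [← huL]; exact u.inv_mul
    have h1 : ((↑u⁻¹ : Matrix (Fin k) (Fin k) ℝ) * L) j j = 1 := by
      rw [h0, Matrix.one_apply_eq]
    rw [Matrix.mul_apply] at h1
    simp [h] at h1
  -- product formula on rows with a known nonzero
  have hmul : ∀ a i, Δ a i ≠ 0 → ∀ j, (Δ * L) a j = Δ a i * L i j := by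
    intro a i hi j
    rw [Matrix.mul_apply]
    apply Finset.sum_eq_single
    · intro i' _ hne
      by_cases h' : Δ a i' = 0
      · simp [h']
      · exact absurd (h1sparse a i' i h' hi) hne
    · simp
  -- nnz as Finset.card
  have hnnz_eq : ∀ M : Matrix (Fin n) (Fin k) ℝ,
      nnz M = (Finset.univ.filter fun p : Fin n × Fin k => M p.1 p.2 ≠ 0).card := by
    intro M
    rw [nnz, ← Set.ncard_coe_finset]
    congr 1
    ext p
    simp
  set NΔ := Finset.univ.filter fun p : Fin n × Fin k => Δ p.1 p.2 ≠ 0 with hNΔ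
  set NL := Finset.univ.filter fun p : Fin n × Fin k => (Δ * L) p.1 p.2 ≠ 0 with hNL
  have hcard : NL.card ≤ NΔ.card := by
    rw [← hnnz_eq, ← hnnz_eq]; exact hnnz
  -- choose a nonzero column in each row of L
  choose c hc using hrow
  -- surjectivity of the injection NΔ → NL
  have hsurj := Finset.surj_on_of_inj_on_of_card_le
    (s := NΔ) (t := NL) (fun p _ => (p.1, c p.2))
    (by
      intro p hp
      rw [hNΔ, Finset.mem_filter] at hp
      rw [hNL, Finset.mem_filter]
      refine ⟨Finset.mem_univ _, ?_⟩
      rw [hmul p.1 p.2 hp.2 (c p.2)]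
      exact mul_ne_zero hp.2 (hc p.2))
    (by
      intro p q hp hq heq
      rw [hNΔ, Finset.mem_filter] at hp hq
      have heq' : (p.1, c p.2) = (q.1, c q.2) := heq
      have h1 : p.1 = q.1 := (Prod.ext_iff.mp heq').1
      have h2 : p.2 = q.2 := h1sparse p.1 p.2 q.2 hp.2 (by rw [h1]; exact hq.2)
      exact Prod.ext h1 h2)
    hcard
  -- each row of L has exactly one nonzero entry
  have hone : ∀ i j1 j2, L i j1 ≠ 0 → L i j2 ≠ 0 → j1 = j2 := by
    intro i j1 j2 h1 h2
    obtain ⟨a, ha⟩ := hsuff i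
    have key : ∀ j, L i j ≠ 0 → j = c i := by
      intro j hj
      have hmem : (a, j) ∈ NL := by
        rw [hNL, Finset.mem_filter]
        refine ⟨Finset.mem_univ _, ?_⟩
        rw [hmul a i ha j]
        exact mul_ne_zero ha hj
      obtain ⟨p, hp, heq⟩ := hsurj (a, j) hmem
      rw [hNΔ, Finset.mem_filter] at hp
      have heq' : (a, j) = (p.1, c p.2) := heq
      have hpa : a = p.1 := (Prod.ext_iff.mp heq').1
      have hpi : p.2 = i := h1sparse a p.2 i (by rw [hpa]; exact hp.2) ha
      have : j = c p.2 := (Prod.ext_iff.mp heq').2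
      rw [this, hpi]
    rw [key j1 h1, key j2 h2]
  -- c is surjective, hence bijective
  have hcsurj : Function.Surjective c := by
    intro j
    obtain ⟨i, hi⟩ := hcol j
    exact ⟨i, (hone i j (c i) hi (hc i)).symm⟩
  have hbij : Function.Bijective c := ⟨Finite.injective_iff_surjective.mpr hcsurj, hcsurj⟩
  refine ⟨fun i => L i (c i), Equiv.ofBijective c hbij, fun i => hc i, ?_⟩
  ext i j
  rw [Matrix.diagonal_mul]
  have hperm : (Equiv.Perm.permMatrix ℝ (Equiv.ofBijective c hbij)) i j
      = if j = c i then (1 : ℝ) else 0 := by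
    simp [Equiv.Perm.permMatrix, PEquiv.toMatrix_apply, Equiv.toPEquiv_apply,
      Equiv.ofBijective_apply, Option.mem_def, eq_comm]
  rw [hperm]
  by_cases hj : j = c i
  · rw [hj]; simp
  · have : L i j = 0 := by
      by_contra h
      exact hj (hone i j (c i) h (hc i))
    rw [this, if_neg hj, mul_zero]
end

section
/- Let Δ be an n×k real matrix with at most one nonzero entry per row, L an invertible k×k matrix, Δ̂ = ΔL, and π a permutation with L_{π(i),i} ≠ 0 for all i. If ∥Δ̂∥₀ ≤ ∥Δ∥₀, then for every column i, ∥Δ̂_{:,i}∥₀ = ∥Δ_{:,π(i)}∥₀, and moreover for all rows a: Δ_{a,π(i)} = 0 implies Δ̂_{a,i} = 0. -/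
/-- Number of nonzero entries of the `i`-th column of a matrix. -/
noncomputable def colNnz {n k : ℕ} (M : Matrix (Fin n) (Fin k) ℝ) (i : Fin k) : ℕ :=
  Set.ncard {a : Fin n | M a i ≠ 0}

lemma nnz_eq_sum_colNnz {n k : ℕ} (M : Matrix (Fin n) (Fin k) ℝ) :
    nnz M = ∑ i, colNnz M i := by
  classical
  unfold nnz colNnz
  rw [Set.ncard_eq_toFinset_card', Set.toFinset_setOf]
  rw [Finset.card_eq_sum_card_fiberwise (f := Prod.snd) (t := Finset.univ)
    (fun x _ => Finset.mem_univ _)]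
  refine Finset.sum_congr rfl fun i _ => ?_
  rw [Set.ncard_eq_toFinset_card', Set.toFinset_setOf]
  refine Finset.card_nbij (fun p => p.1) ?_ ?_ ?_
  · intro p hp
    simp only [Finset.coe_filter, Finset.mem_filter, Finset.mem_univ, true_and, Set.mem_setOf_eq] at hp ⊢
    rw [← hp.2]; exact hp.1
  · intro p hp q hq hpq
    simp only [Finset.coe_filter, Set.mem_setOf_eq] at hp hq
    exact Prod.ext hpq (hp.2.trans hq.2.symm)
  · intro a ha
    exact ⟨(a, i), by simpa using ha, rfl⟩

theorem sparsity_constraint_forces_columnwise_equality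
    {n k : ℕ} (Δ : Matrix (Fin n) (Fin k) ℝ)
    (h1sparse : ∀ a : Fin n, ∀ i j : Fin k, Δ a i ≠ 0 → Δ a j ≠ 0 → i = j)
    (L : Matrix (Fin k) (Fin k) ℝ) (hL : IsUnit L)
    (π : Equiv.Perm (Fin k)) (hπ : ∀ i : Fin k, L (π i) i ≠ 0)
    (hnnz : nnz (Δ * L) ≤ nnz Δ) :
    ∀ i : Fin k, colNnz (Δ * L) i = colNnz Δ (π i) ∧
      ∀ a : Fin n, Δ a (π i) = 0 → (Δ * L) a i = 0 := by
  classical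
  -- key: if Δ a (π i) ≠ 0 then (Δ*L) a i = Δ a (π i) * L (π i) i ≠ 0
  have key : ∀ i : Fin k, ∀ a : Fin n, Δ a (π i) ≠ 0 → (Δ * L) a i ≠ 0 := by
    intro i a ha
    have : (Δ * L) a i = Δ a (π i) * L (π i) i := by
      rw [Matrix.mul_apply]
      refine Finset.sum_eq_single (π i) (fun j _ hj => ?_) (fun h => absurd (Finset.mem_univ _) h)
      by_cases hz : Δ a j = 0
      · rw [hz, zero_mul]
      · exact absurd (h1sparse a j (π i) hz ha) hj
    rw [this]
    exact mul_ne_zero ha (hπ i)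
  have hsub : ∀ i : Fin k, {a : Fin n | Δ a (π i) ≠ 0} ⊆ {a : Fin n | (Δ * L) a i ≠ 0} :=
    fun i a ha => key i a ha
  have hle : ∀ i : Fin k, colNnz Δ (π i) ≤ colNnz (Δ * L) i := fun i =>
    Set.ncard_le_ncard (hsub i) (Set.toFinite _)
  have hsum1 : nnz Δ = ∑ i, colNnz Δ (π i) := by
    rw [nnz_eq_sum_colNnz]
    exact (Equiv.sum_comp π (colNnz Δ)).symm
  have hsum2 : ∑ i, colNnz Δ (π i) ≤ ∑ i, colNnz (Δ * L) i :=
    Finset.sum_le_sum fun i _ => hle i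
  have heq : ∑ i, colNnz Δ (π i) = ∑ i, colNnz (Δ * L) i := by
    refine le_antisymm hsum2 ?_
    rw [← nnz_eq_sum_colNnz, ← hsum1]; exact hnnz
  have heach : ∀ i ∈ Finset.univ, colNnz Δ (π i) = colNnz (Δ * L) i :=
    (Finset.sum_eq_sum_iff_of_le fun i _ => hle i).mp heq
  intro i
  have hcol : colNnz (Δ * L) i = colNnz Δ (π i) := (heach i (Finset.mem_univ i)).symm
  have hseteq : {a : Fin n | Δ a (π i) ≠ 0} = {a : Fin n | (Δ * L) a i ≠ 0} :=
    Set.eq_of_subset_of_ncard_le (hsub i) (le_of_eq hcol) (Set.toFinite _)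
  refine ⟨hcol, fun a ha => ?_⟩
  by_contra hne
  have : a ∈ {a : Fin n | Δ a (π i) ≠ 0} := hseteq ▸ hne
  exact this ha
end

section
/- Let Δ be an n×k real matrix with at most one nonzero entry per row, L an invertible k×k matrix, and π a permutation of {1,...,k}. Suppose that for every i and every row a, Δ_{a,π(i)} = 0 implies (ΔL)_{a,i} = 0. If additionally for every column index j there exists a row a with Δ_{a,j} ≠ 0, then for every i and every column index j ≠ i, L_{π(i),j} = 0; hence L has exactly one nonzero entry per row, i.e., L is a permutation-scaling matrix. -/
theorem gamma_empty_implies_perm_scaling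
    {n k : ℕ} (Δ : Matrix (Fin n) (Fin k) ℝ)
    (h1sparse : ∀ a : Fin n, ∀ i j : Fin k, Δ a i ≠ 0 → Δ a j ≠ 0 → i = j)
    (L : Matrix (Fin k) (Fin k) ℝ) (hL : IsUnit L)
    (π : Equiv.Perm (Fin k))
    (himp : ∀ (i : Fin k) (a : Fin n), Δ a (π i) = 0 → (Δ * L) a i = 0)
    (hsuff : ∀ j : Fin k, ∃ a : Fin n, Δ a j ≠ 0) :
    (∀ i j : Fin k, j ≠ i → L (π i) j = 0) ∧
      ∃ (d : Fin k → ℝ) (σ : Equiv.Perm (Fin k)),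
        (∀ i, d i ≠ 0) ∧ L = Matrix.diagonal d * σ.permMatrix ℝ := by
  have key : ∀ i j : Fin k, j ≠ i → L (π i) j = 0 := by
    intro i j hji
    obtain ⟨a, ha⟩ := hsuff (π i)
    have hzero : Δ a (π j) = 0 := by
      by_contra h
      exact hji (π.injective (h1sparse a (π j) (π i) h ha))
    have hML := himp j a hzero
    rw [Matrix.mul_apply] at hML
    have hsum : ∑ m, Δ a m * L m j = Δ a (π i) * L (π i) j := by
      refine Finset.sum_eq_single (π i) ?_ (by simp)
      intro m _ hm
      have : Δ a m = 0 := by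
        by_contra h
        exact hm (h1sparse a m (π i) h ha)
      simp [this]
    rw [hsum] at hML
    exact (mul_eq_zero.mp hML).resolve_left ha
  refine ⟨key, fun m => L m (π⁻¹ m), π⁻¹, ?_, ?_⟩
  · intro m hm
    have hrow : ∀ j, L m j = 0 := by
      intro j
      rcases eq_or_ne j (π⁻¹ m) with rfl | hj
      · exact hm
      · have := key (π⁻¹ m) j hj
        simpa using this
    have hdet : L.det = 0 := by
      apply Matrix.det_eq_zero_of_row_eq_zero m
      exact hrow
    have := (Matrix.isUnit_iff_isUnit_det L).mp hL
    rw [hdet] at this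
    exact (by simp at this : False)
  · ext m j
    rw [Matrix.mul_apply]
    rw [Finset.sum_eq_single m
      (by intro b _ hb; rw [Matrix.diagonal_apply_ne _ (Ne.symm hb), zero_mul]) (by simp)]
    rw [Matrix.diagonal_apply_eq]
    simp only [Equiv.Perm.permMatrix, PEquiv.toMatrix_apply, Equiv.toPEquiv_apply,
      Option.mem_def, Option.some.injEq]
    rcases eq_or_ne j (π⁻¹ m) with rfl | hj
    · simp
    · have hLz : L m j = 0 := by simpa using key (π⁻¹ m) j hj
      rw [hLz, if_neg (fun h => hj h.symm), mul_zero]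
end

section
/- Combining linear identification with sparse disentanglement: let Δ ∈ ℝ^{n×k} have at most one nonzero entry per row and at least one nonzero entry in each column. Let L ∈ ℝ^{k×k} be invertible with ∥ΔL∥₀ ≤ ∥Δ∥₀, and let Ψ, Ψ̂ : 𝒳 → ℝ^k satisfy Ψ(x) = L Ψ̂(x) for all x. Then there exist a permutation matrix P and an invertible diagonal matrix D such that Ψ̂(x) = D P Ψ(x) for all x ∈ 𝒳; i.e., each component of Ψ̂ is a nonzero scalar multiple of some component of Ψ. -/
open Matrix

lemma nnz_eq_sum {n k : ℕ} (M : Matrix (Fin n) (Fin k) ℝ) :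
    nnz M = ∑ a : Fin n, ∑ j : Fin k, if M a j ≠ 0 then 1 else 0 := by
  rw [nnz, Set.ncard_eq_toFinset_card', Set.toFinset_setOf, Finset.card_filter,
    Fintype.sum_prod_type]

theorem linear_plus_sparse_identification_disentangles
    {n k : ℕ} {X : Type*} [Nonempty X]
    (Δ : Matrix (Fin n) (Fin k) ℝ)
    (h1sparse : ∀ a : Fin n, ∀ i j : Fin k, Δ a i ≠ 0 → Δ a j ≠ 0 → i = j)
    (hsuff : ∀ i : Fin k, ∃ a : Fin n, Δ a i ≠ 0)
    (L : Matrix (Fin k) (Fin k) ℝ) (hL : IsUnit L)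
    (hnnz : nnz (Δ * L) ≤ nnz Δ)
    (Ψ Ψhat : X → Fin k → ℝ)
    (hlin : ∀ x : X, Ψ x = L.mulVec (Ψhat x)) :
    ∃ (d : Fin k → ℝ) (σ : Equiv.Perm (Fin k)),
      (∀ i, d i ≠ 0) ∧
        ∀ x : X, Ψhat x = (Matrix.diagonal d * σ.permMatrix ℝ).mulVec (Ψ x) := by
  classical
  obtain ⟨B, hB1, hB2⟩ : ∃ B, L * B = 1 ∧ B * L = 1 := by
    obtain ⟨u, hu⟩ := hL
    exact ⟨(↑u⁻¹ : Matrix (Fin k) (Fin k) ℝ), by rw [← hu]; exact u.mul_inv, by rw [← hu]; exact u.inv_mul⟩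
  -- vecMul by L is injective
  have hvec : ∀ v : Fin k → ℝ, v ᵥ* L = 0 → v = 0 := by
    intro v hv
    have h2 : v ᵥ* (L * B) = 0 := by
      rw [← Matrix.vecMul_vecMul, hv, Matrix.zero_vecMul]
    simpa [hB1] using h2
  have hsingle : ∀ (i : Fin k) (r : ℝ) (j : Fin k),
      ((Pi.single i r : Fin k → ℝ) ᵥ* L) j = r * L i j := by
    intro i r j
    simp only [Matrix.vecMul, dotProduct]
    rw [Finset.sum_eq_single i]
    · simp
    · intro b _ hb; simp [Pi.single_apply, hb]
    · simp
  -- every row of L has a nonzero entry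
  have hrow : ∀ i : Fin k, ∃ j, L i j ≠ 0 := by
    intro i
    by_contra h
    push_neg at h
    have hz : (Pi.single i (1:ℝ) : Fin k → ℝ) ᵥ* L = 0 := by
      ext j; rw [hsingle, h j]; simp
    have := congrFun (hvec _ hz) i
    simp at this
  -- counting
  set f : Fin n → ℕ := fun a => ∑ j : Fin k, if (Δ * L) a j ≠ 0 then 1 else 0 with hf
  set g : Fin n → ℕ := fun a => ∑ j : Fin k, if Δ a j ≠ 0 then 1 else 0 with hg
  -- per-row analysis
  have hrowcase : ∀ a : Fin n, ∀ i : Fin k, Δ a i ≠ 0 →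
      g a = 1 ∧ f a = ∑ j : Fin k, if L i j ≠ 0 then 1 else 0 := by
    intro a i hi
    constructor
    · have : ∀ j : Fin k, (if Δ a j ≠ 0 then (1:ℕ) else 0) = if j = i then 1 else 0 := by
        intro j
        by_cases hj : Δ a j ≠ 0
        · rcases h1sparse a j i hj hi with rfl; simp [hj]
        · push_neg at hj
          have : j ≠ i := by rintro rfl; exact hi hj
          simp [hj, this]
      simp only [hg, this]
      simp
    · have hmul : ∀ j : Fin k, (Δ * L) a j = Δ a i * L i j := by
        intro j
        rw [Matrix.mul_apply]
        rw [Finset.sum_eq_single i]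
        · intro b _ hb
          have : Δ a b = 0 := by
            by_contra hb'
            exact hb (h1sparse a b i hb' hi)
          simp [this]
        · simp
      simp only [hf, hmul, mul_ne_zero_iff, hi, true_and]
      simp [hi]
  have hle : ∀ a ∈ Finset.univ, g a ≤ f a := by
    intro a _
    by_cases ha : ∃ i, Δ a i ≠ 0
    · obtain ⟨i, hi⟩ := ha
      obtain ⟨hg1, hf1⟩ := hrowcase a i hi
      rw [hg1, hf1]
      obtain ⟨j, hj⟩ := hrow i
      calc 1 = (if L i j ≠ 0 then 1 else 0) := by simp [hj]
        _ ≤ _ := Finset.single_le_sum (f := fun j => if L i j ≠ 0 then (1:ℕ) else 0)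
            (fun _ _ => Nat.zero_le _) (Finset.mem_univ j)
    · push_neg at ha
      have : g a = 0 := by simp [hg, ha]
      omega
  have hsums : ∑ a, g a = ∑ a, f a :=
    le_antisymm (Finset.sum_le_sum hle)
      (by rw [← nnz_eq_sum, ← nnz_eq_sum]; exact hnnz)
  have heq : ∀ a ∈ Finset.univ, g a = f a :=
    (Finset.sum_eq_sum_iff_of_le hle).mp hsums
  -- each row of L has exactly one nonzero entry
  have huniq : ∀ i : Fin k, ∃ j, L i j ≠ 0 ∧ ∀ j', L i j' ≠ 0 → j' = j := by
    intro i
    obtain ⟨a, ha⟩ := hsuff i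
    obtain ⟨hg1, hf1⟩ := hrowcase a i ha
    have hr : (∑ j : Fin k, if L i j ≠ 0 then 1 else 0) = 1 := by
      rw [← hf1, ← heq a (Finset.mem_univ a), hg1]
    have hcard : (Finset.univ.filter fun j => L i j ≠ 0).card = 1 := by
      rw [Finset.card_filter]; exact hr
    obtain ⟨j, hj⟩ := Finset.card_eq_one.mp hcard
    refine ⟨j, ?_, ?_⟩
    · have : j ∈ Finset.univ.filter fun j => L i j ≠ 0 := hj ▸ Finset.mem_singleton_self j
      exact (Finset.mem_filter.mp this).2
    · intro j' hj'
      have : j' ∈ Finset.univ.filter fun j => L i j ≠ 0 :=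
        Finset.mem_filter.mpr ⟨Finset.mem_univ j', hj'⟩
      rw [hj] at this
      exact Finset.mem_singleton.mp this
  choose π hπ hπu using huniq
  obtain ⟨c, hcdef⟩ : ∃ c : Fin k → ℝ, ∀ i, c i = L i (π i) := ⟨_, fun _ => rfl⟩
  have hc0 : ∀ i, c i ≠ 0 := fun i => by rw [hcdef]; exact hπ i
  have hLzero : ∀ i j : Fin k, j ≠ π i → L i j = 0 := by
    intro i j hj
    by_contra h
    exact hj (hπu i j h)
  -- π is injective
  have hinj : Function.Injective π := by
    intro i i' h
    by_contra hne
    set v : Fin k → ℝ := Pi.single i (c i') - Pi.single i' (c i) with hv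
    have hvL : v ᵥ* L = 0 := by
      ext j
      rw [hv, Matrix.sub_vecMul]
      simp only [Pi.sub_apply, Pi.zero_apply, hsingle]
      by_cases hj : j = π i
      · subst hj
        rw [show L i' (π i) = c i' by rw [hcdef, h], show L i (π i) = c i from (hcdef i).symm]
        ring
      · rw [hLzero i j hj, hLzero i' j (by rwa [← h])]
        ring
    have hv0 := hvec v hvL
    have := congrFun hv0 i
    simp [hv, Pi.single_apply, hne, Ne.symm hne] at this
    exact hc0 i' this
  have hbij : Function.Bijective π := Finite.injective_iff_bijective.mp hinj
  set e : Equiv.Perm (Fin k) := Equiv.ofBijective π hbij with he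
  refine ⟨fun j => (c (e.symm j))⁻¹, e.symm, fun j => inv_ne_zero (hc0 _), ?_⟩
  intro x
  ext j
  have hperm : ∀ m : Fin k, (Equiv.Perm.permMatrix ℝ e.symm) j m = if m = e.symm j then 1 else 0 := by
    intro m
    simp [Equiv.Perm.permMatrix, PEquiv.toMatrix_apply, Equiv.toPEquiv_apply, eq_comm]
  have hΨ : Ψ x (e.symm j) = c (e.symm j) * Ψhat x j := by
    rw [hlin x]
    rw [Matrix.mulVec, dotProduct]
    rw [Finset.sum_eq_single (π (e.symm j))]
    · have h2 : π (e.symm j) = j := e.apply_symm_apply j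
      rw [hcdef, h2]
    · intro b _ hb
      rw [hLzero _ b hb]; ring
    · simp
  rw [Matrix.mulVec, dotProduct]
  rw [Finset.sum_eq_single (e.symm j)]
  · rw [Matrix.diagonal_mul, hperm, if_pos rfl, hΨ, mul_one, ← mul_assoc]
    rw [inv_mul_cancel₀ (hc0 (e.symm j)), one_mul]
  · intro b _ hb
    rw [Matrix.diagonal_mul, hperm]
    simp [hb]
  · simp
end
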